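/- arXiv:2504.09161 — 2 statements merged into one kernel-verified Lean document; each statement's English description precedes it below -/
import Mathlib

section
/- The supertrace of (−1)^F e^{−β[Q,Q†]} over the submodule Ω⁻ = η·ℂ[x²] + x·ℂ[x²] of ℂ[x,η] equals −1 for every β > 0, where [Q,Q†] acts as x∂ₓ − η∂_η + 1 and F is the η-degree. -/
/-- the supertrace of (−1)^F e^{−β[Q,Q†]} over Ω⁻ = η·ℂ[x²] + x·ℂ[x²]
equals −1 for every β > 0.  The eigenbasis of [Q,Q†] = x∂ₓ − η∂_η + 1 on Ω⁻ is
{x^{2k+1}} (even, eigenvalue 2k+2) and {η x^{2k}} (odd, eigenvalue 2k), so the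
supertrace is ∑_k e^{−β(2k+2)} − ∑_k e^{−β·2k}; both series converge absolutely. -/
theorem stmt_3 (β : ℝ) (hβ : 0 < β) :
    Summable (fun k : ℕ => Real.exp (-β * (2 * (k : ℝ) + 2))) ∧
    Summable (fun k : ℕ => Real.exp (-β * (2 * (k : ℝ)))) ∧
    (∑' k : ℕ, Real.exp (-β * (2 * (k : ℝ) + 2)))
      - (∑' k : ℕ, Real.exp (-β * (2 * (k : ℝ)))) = -1 := by
  set r : ℝ := Real.exp (-2 * β) with hr
  have hr0 : 0 < r := Real.exp_pos _
  have hr1 : r < 1 := Real.exp_lt_one_iff.mpr (by linarith)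
  have h1 : (fun k : ℕ => Real.exp (-β * (2 * (k : ℝ) + 2))) = fun k : ℕ => r * r ^ k := by
    funext k
    rw [hr, ← Real.exp_nat_mul, ← Real.exp_add]
    ring_nf
  have h2 : (fun k : ℕ => Real.exp (-β * (2 * (k : ℝ)))) = fun k : ℕ => r ^ k := by
    funext k
    rw [hr, ← Real.exp_nat_mul]
    ring_nf
  have hs : Summable (fun k : ℕ => r ^ k) :=
    summable_geometric_of_lt_one hr0.le hr1
  refine ⟨?_, ?_, ?_⟩
  · rw [h1]; exact hs.mul_left r
  · rw [h2]; exact hs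
  · rw [h1, h2, tsum_mul_left, tsum_geometric_of_lt_one hr0.le hr1]
    have hne : (1:ℝ) - r ≠ 0 := by linarith
    field_simp
    ring
end

section
/- In su(1,1|1) with commutation relations as in (the standard presentation), a highest weight Λ = (Δ, r) (dimension and R-charge) with Qv = Sv = Ev = 0 on the highest weight vector v satisfies: unitarity (positivity of the contravariant form on S̄v, Q̄v, and S̄Q̄v) forces −Δ − r ≥ 0, −Δ + r ≥ 0, and (−Δ−r)(−Δ+r−2) ≥ 0. -/
local notation "⟪" x ", " y "⟫" => @inner ℂ _ _ x y

/-- in a unitary representation of su(1,1|1) (operators on a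
pre-Hilbert space satisfying the standard sl(2|1) relations and the unitarity
adjoints S̄† = Q, Q̄† = −S, F† = −E), a highest weight vector v with Qv = Sv = Ev = 0,
Hv = Δ·v, Jv = r·v and ⟨v,v⟩ = 1 satisfies the unitarity constraints
−Δ − r ≥ 0, −Δ + r ≥ 0 and (−Δ−r)(−Δ+r−2) ≥ 0, coming from positivity of the
norms of S̄v, Q̄v and S̄Q̄v. -/
theorem stmt_17 {𝓗 : Type*} [NormedAddCommGroup 𝓗] [InnerProductSpace ℂ 𝓗]
    (Hop Jop E F Q Qb S Sb : 𝓗 →ₗ[ℂ] 𝓗)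
    -- sl(2) triple relations
    (hHE : Hop * E - E * Hop = (2 : ℂ) • E)
    (hHF : Hop * F - F * Hop = (-2 : ℂ) • F)
    (hEF : E * F - F * E = Hop)
    -- even–odd relations
    (hHQ : Hop * Q - Q * Hop = -Q)
    (hHQb : Hop * Qb - Qb * Hop = -Qb)
    (hHS : Hop * S - S * Hop = S)
    (hHSb : Hop * Sb - Sb * Hop = Sb)
    (hJQ : Jop * Q - Q * Jop = Q)
    (hJQb : Jop * Qb - Qb * Jop = -Qb)
    (hJS : Jop * S - S * Jop = S)
    (hJSb : Jop * Sb - Sb * Jop = -Sb)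
    -- odd–odd relations
    (hQQ : Q * Q = 0) (hSS : S * S = 0) (hQbQb : Qb * Qb = 0) (hSbSb : Sb * Sb = 0)
    (hQS : Q * S + S * Q = 0) (hQbSb : Qb * Sb + Sb * Qb = 0)
    (hQQb : Q * Qb + Qb * Q = (2 : ℂ) • F)
    (hSSb : S * Sb + Sb * S = (2 : ℂ) • E)
    (hQSb : Q * Sb + Sb * Q = -Hop - Jop)
    (hSQb : S * Qb + Qb * S = Hop - Jop)
    -- unitarity: S̄† = Q, Q̄† = −S, F† = −E
    (hadjSb : ∀ u w : 𝓗, ⟪Q u, w⟫ = ⟪u, Sb w⟫)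
    (hadjQb : ∀ u w : 𝓗, ⟪(-S) u, w⟫ = ⟪u, Qb w⟫)
    (hadjF : ∀ u w : 𝓗, ⟪(-E) u, w⟫ = ⟪u, F w⟫)
    -- highest weight vector of weight Λ = (Δ, r)
    (Δ r : ℝ) (v : 𝓗)
    (hQv : Q v = 0) (hSv : S v = 0) (hEv : E v = 0)
    (hHv : Hop v = (Δ : ℂ) • v) (hJv : Jop v = (r : ℂ) • v)
    (hnorm : ⟪v, v⟫ = 1) :
    0 ≤ -Δ - r ∧ 0 ≤ -Δ + r ∧ 0 ≤ (-Δ - r) * (-Δ + r - 2) := by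
  have hQSbv : Q (Sb v) = (-(Δ:ℂ) - r) • v := by
    have h := LinearMap.congr_fun hQSb v
    simp only [LinearMap.sub_apply, LinearMap.add_apply, Module.End.mul_apply,
      LinearMap.neg_apply, hQv, hHv, hJv, map_zero, add_zero] at h
    linear_combination (norm := module) h
  have hSQbv : S (Qb v) = ((Δ:ℂ) - r) • v := by
    have h := LinearMap.congr_fun hSQb v
    simp only [LinearMap.sub_apply, LinearMap.add_apply, Module.End.mul_apply,
      hSv, hHv, hJv, map_zero, add_zero] at h
    linear_combination (norm := module) h
  have hQQbv : Q (Qb v) = (2:ℂ) • F v := by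
    have h := LinearMap.congr_fun hQQb v
    simpa only [LinearMap.add_apply, Module.End.mul_apply, LinearMap.smul_apply,
      hQv, map_zero, add_zero] using h
  have hEFv : E (F v) = (Δ:ℂ) • v := by
    have h := LinearMap.congr_fun hEF v
    simp only [LinearMap.sub_apply, Module.End.mul_apply, hEv, hHv, map_zero, sub_zero] at h
    exact h
  have hHQbv : Hop (Qb v) = ((Δ:ℂ) - 1) • Qb v := by
    have h := LinearMap.congr_fun hHQb v
    simp only [LinearMap.sub_apply, Module.End.mul_apply, LinearMap.neg_apply, hHv, map_smul] at h
    linear_combination (norm := module) h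
  have hJQbv : Jop (Qb v) = ((r:ℂ) - 1) • Qb v := by
    have h := LinearMap.congr_fun hJQb v
    simp only [LinearMap.sub_apply, Module.End.mul_apply, LinearMap.neg_apply, hJv, map_smul] at h
    linear_combination (norm := module) h
  have hQSbQbv : Q (Sb (Qb v)) = ((2:ℂ) - Δ - r) • Qb v - (2:ℂ) • Sb (F v) := by
    have h := LinearMap.congr_fun hQSb (Qb v)
    simp only [LinearMap.sub_apply, LinearMap.add_apply, Module.End.mul_apply,
      LinearMap.neg_apply, hQQbv, hHQbv, hJQbv, map_smul] at h
    linear_combination (norm := module) h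
  have hSSbFv : S (Sb (F v)) = ((2:ℂ)*Δ) • v - Sb (S (F v)) := by
    have h := LinearMap.congr_fun hSSb (F v)
    simp only [LinearMap.add_apply, Module.End.mul_apply, LinearMap.smul_apply, hEFv] at h
    linear_combination (norm := module) h
  have hSbv0 : ∀ x : 𝓗, ⟪Sb x, v⟫ = 0 := by
    intro x
    have h0 : ⟪v, Sb x⟫ = 0 := by rw [← hadjSb, hQv, inner_zero_left]
    calc ⟪Sb x, v⟫ = starRingEnd ℂ ⟪v, Sb x⟫ := (inner_conj_symm _ _).symm
    _ = 0 := by rw [h0]; simp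
  have e1 : ⟪Sb v, Sb v⟫ = ((-Δ - r : ℝ) : ℂ) := by
    rw [← hadjSb (Sb v) v, hQSbv, inner_smul_left, hnorm]
    push_cast
    simp [map_sub, map_neg, Complex.conj_ofReal]
  have e2 : ⟪Qb v, Qb v⟫ = ((-Δ + r : ℝ) : ℂ) := by
    have key : (-S) (Qb v) = (-(Δ:ℂ) + r) • v := by
      simp only [LinearMap.neg_apply, hSQbv]; module
    rw [← hadjQb (Qb v) v, key, inner_smul_left, hnorm]
    push_cast
    simp [map_add, map_neg, Complex.conj_ofReal]
  have e3 : ⟪Sb (Qb v), Sb (Qb v)⟫ = (((-Δ - r) * (-Δ + r - 2) : ℝ) : ℂ) := by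
    have key : (-S) (Q (Sb (Qb v)))
        = ((4*(Δ:ℂ) - ((2:ℂ) - Δ - r) * ((Δ:ℂ) - r)) • v - (2:ℂ) • Sb (S (F v))) := by
      simp only [LinearMap.neg_apply, hQSbQbv, map_sub, map_smul, hSQbv, hSSbFv]
      match_scalars <;> ring
    rw [← hadjSb (Sb (Qb v)) (Qb v), ← hadjQb (Q (Sb (Qb v))) v, key,
      inner_sub_left, inner_smul_left, inner_smul_left, hSbv0, hnorm]
    push_cast
    simp only [map_sub, map_mul, map_neg, map_ofNat, Complex.conj_ofReal, mul_zero, sub_zero,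
      mul_one]
    ring
  have key : ∀ (x : 𝓗) (c : ℝ), ⟪x, x⟫ = (c:ℂ) → 0 ≤ c := by
    intro x c hc
    have h := inner_self_nonneg (𝕜 := ℂ) (x := x)
    rw [hc] at h
    simpa using h
  exact ⟨key _ _ e1, key _ _ e2, key _ _ e3⟩
end
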